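/- For every constant β > 0, the redundancy of S^β is lower bounded uniformly in β by R_S^β(x_{1:n}) ≥ CL_w(𝒜) − m·ln m + Σ_{j∈𝒜} (1/2)·ln(n_j/(2π)) − (1/2)·ln n − 0.45·m − 0.43. -/

import Mathlib

open Finset Real Filter

variable {𝒳 : Type*} [Fintype 𝒳] [DecidableEq 𝒳]

/-- `n_i^t`: number of occurrences of symbol `i` among the first `t` symbols
`x 0, …, x (t-1)` (the paper's `x_1, …, x_t`). -/
def cnt (x : ℕ → 𝒳) (i : 𝒳) (t : ℕ) : ℕ :=
  ((Finset.range t).filter fun τ => x τ = i).card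

/-- `𝒜_t`: the set of symbols occurring among the first `t` symbols. -/
def alph (x : ℕ → 𝒳) (t : ℕ) : Finset 𝒳 := (Finset.range t).image x

/-- Predictive probability `S^{β⃗}(x_{t+1} = i | x_{1:t})`. -/
noncomputable def Spred (x : ℕ → 𝒳) (w : ℕ → 𝒳 → ℝ) (β : ℕ → ℝ) (t : ℕ) (i : 𝒳) : ℝ :=
  if 0 < cnt x i t then (cnt x i t : ℝ) / (t + β t) else β t * w t i / (t + β t)

/-- Joint probability `S^{β⃗}(x_{1:n})`. -/
noncomputable def Sjoint (x : ℕ → 𝒳) (w : ℕ → 𝒳 → ℝ) (β : ℕ → ℝ) (n : ℕ) : ℝ :=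
  ∏ t ∈ Finset.range n, Spred x w β t (x t)

/-- `𝒩`: the set of times `t ∈ {0,…,n-1}` at which a new symbol occurs. -/
def newTimes (x : ℕ → 𝒳) (n : ℕ) : Finset ℕ :=
  (Finset.range n).filter fun t => x t ∉ alph x t

/-- `CL_w(𝒜)`: code length of the used alphabet. -/
noncomputable def CLw (x : ℕ → 𝒳) (w : ℕ → 𝒳 → ℝ) (n : ℕ) : ℝ :=
  ∑ t ∈ newTimes x n, Real.log (1 / w t (x t))

/-- Redundancy `R_S^{β⃗}(x_{1:n}) = ln(n^{-n} ∏_{j∈𝒜} n_j^{n_j}) - ln S^{β⃗}(x_{1:n})`. -/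
noncomputable def Red (x : ℕ → 𝒳) (w : ℕ → 𝒳 → ℝ) (β : ℕ → ℝ) (n : ℕ) : ℝ :=
  Real.log (((n : ℝ) ^ n)⁻¹ * ∏ j ∈ alph x n, (cnt x j n : ℝ) ^ cnt x j n)
    - Real.log (Sjoint x w β n)

set_option linter.unusedSectionVars false

section Combinatorial
variable {𝒳 : Type*} [Fintype 𝒳] [DecidableEq 𝒳]

lemma cnt_succ (x : ℕ → 𝒳) (j : 𝒳) (t : ℕ) :
    cnt x j (t+1) = cnt x j t + if x t = j then 1 else 0 := by
  unfold cnt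
  rw [Finset.range_add_one, Finset.filter_insert]
  split <;> simp [Finset.card_insert_of_notMem, Finset.mem_filter]

lemma cnt_pos_iff (x : ℕ → 𝒳) (i : 𝒳) (t : ℕ) :
    0 < cnt x i t ↔ i ∈ alph x t := by
  unfold cnt alph
  rw [Finset.card_pos, Finset.filter_nonempty_iff]
  simp [eq_comm]

lemma sum_fiber (x : ℕ → 𝒳) (j : 𝒳) (g : ℕ → ℝ) (n : ℕ) :
    ∑ t ∈ (Finset.range n).filter (fun t => x t = j), g (cnt x j t)
      = ∑ k ∈ Finset.range (cnt x j n), g k := by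
  induction n with
  | zero => simp [cnt]
  | succ n ih =>
    rw [Finset.range_add_one, Finset.filter_insert, cnt_succ]
    split
    · rename_i h
      rw [Finset.sum_insert (by simp), ih, Finset.range_add_one,
        Finset.sum_insert (by simp)]
    · rename_i h
      rw [ih]
      norm_num

lemma sum_over_range (x : ℕ → 𝒳) (g : ℕ → ℝ) (n : ℕ) :
    ∑ t ∈ Finset.range n, g (cnt x (x t) t)
      = ∑ j ∈ alph x n, ∑ k ∈ Finset.range (cnt x j n), g k := by
  have hmaps : ∀ t ∈ Finset.range n, x t ∈ alph x n := fun t ht =>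
    Finset.mem_image_of_mem x ht
  rw [← Finset.sum_fiberwise_of_maps_to hmaps (fun t => g (cnt x (x t) t))]
  refine Finset.sum_congr rfl fun j hj => ?_
  rw [← sum_fiber x j g n]
  refine Finset.sum_congr rfl fun t ht => ?_
  rw [(Finset.mem_filter.1 ht).2]

lemma cnt_pos_of_mem (x : ℕ → 𝒳) (n : ℕ) {j : 𝒳} (hj : j ∈ alph x n) :
    0 < cnt x j n := (cnt_pos_iff x j n).2 hj

lemma sum_cnt (x : ℕ → 𝒳) (n : ℕ) : ∑ j ∈ alph x n, cnt x j n = n := by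
  have hmaps : ∀ t ∈ Finset.range n, x t ∈ alph x n := fun t ht =>
    Finset.mem_image_of_mem x ht
  have := Finset.card_eq_sum_card_fiberwise hmaps
  rw [Finset.card_range] at this
  exact this.symm

lemma card_newTimes (x : ℕ → 𝒳) (n : ℕ) :
    (newTimes x n).card = (alph x n).card := by
  have key := sum_over_range x (fun k => if k = 0 then (1:ℝ) else 0) n
  have hl : ∑ t ∈ Finset.range n, (if cnt x (x t) t = 0 then (1:ℝ) else 0)
      = ((newTimes x n).card : ℝ) := by
    rw [Finset.sum_boole]
    unfold newTimes
    congr 2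
    apply Finset.filter_congr
    intro t ht
    have hiff := cnt_pos_iff x (x t) t
    constructor
    · intro h0 hm
      rw [← hiff] at hm
      omega
    · intro hm
      by_contra h0
      exact hm (hiff.1 (Nat.pos_of_ne_zero h0))
  have hr : ∀ j ∈ alph x n,
      (∑ k ∈ Finset.range (cnt x j n), if k = 0 then (1:ℝ) else 0) = 1 := by
    intro j hj
    have h1 : 1 ≤ cnt x j n := cnt_pos_of_mem x n hj
    rw [Finset.sum_boole, Finset.filter_eq', if_pos (Finset.mem_range.2 h1)]
    simp
  rw [hl, Finset.sum_congr rfl hr, Finset.sum_const, nsmul_eq_mul, mul_one] at key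
  exact_mod_cast key

end Combinatorial

section LogS
variable {𝒳 : Type*} [Fintype 𝒳] [DecidableEq 𝒳]

lemma newTimes_eq (x : ℕ → 𝒳) (n : ℕ) :
    newTimes x n = (Finset.range n).filter (fun t => cnt x (x t) t = 0) := by
  unfold newTimes
  apply Finset.filter_congr
  intro t ht
  have hiff := cnt_pos_iff x (x t) t
  constructor
  · intro hm
    by_contra h0
    exact hm (hiff.1 (Nat.pos_of_ne_zero h0))
  · intro h0 hm
    rw [← hiff] at hm
    omega

lemma log_Spred (x : ℕ → 𝒳) (w : ℕ → 𝒳 → ℝ) (β : ℝ) (hβ : 0 < β)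
    (hw : ∀ t i, 0 < w t i) (t : ℕ) :
    Real.log (Spred x w (fun _ => β) t (x t)) =
      (if cnt x (x t) t = 0 then Real.log β + Real.log (w t (x t))
        else Real.log (cnt x (x t) t)) - Real.log ((t:ℝ) + β) := by
  have htβ : (0:ℝ) < (t:ℝ) + β := by positivity
  unfold Spred
  by_cases h : 0 < cnt x (x t) t
  · rw [if_pos h, if_neg (by omega), Real.log_div (by exact_mod_cast h.ne') htβ.ne']
  · rw [if_neg h, if_pos (by omega), Real.log_div (mul_pos hβ (hw t (x t))).ne' htβ.ne',
      Real.log_mul hβ.ne' (hw t (x t)).ne']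

lemma log_Sjoint (x : ℕ → 𝒳) (w : ℕ → 𝒳 → ℝ) (β : ℝ) (hβ : 0 < β)
    (hw : ∀ t i, 0 < w t i) (n : ℕ) :
    Real.log (Sjoint x w (fun _ => β) n) =
      ((alph x n).card : ℝ) * Real.log β + (∑ t ∈ newTimes x n, Real.log (w t (x t)))
      + (∑ j ∈ alph x n, ∑ k ∈ Finset.range (cnt x j n), Real.log (k:ℝ))
      - ∑ t ∈ Finset.range n, Real.log ((t:ℝ) + β) := by
  have hne : ∀ t ∈ Finset.range n, Spred x w (fun _ => β) t (x t) ≠ 0 := by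
    intro t _
    have htβ : (0:ℝ) < (t:ℝ) + β := by positivity
    unfold Spred
    split
    · rename_i h
      have : (0:ℝ) < (cnt x (x t) t : ℝ) := by exact_mod_cast h
      positivity
    · have := hw t (x t)
      positivity
  rw [Sjoint, Real.log_prod hne]
  have hsplit : ∀ t, Real.log (Spred x w (fun _ => β) t (x t)) =
      ((if cnt x (x t) t = 0 then Real.log β + Real.log (w t (x t)) else 0)
        + Real.log ((cnt x (x t) t : ℕ) : ℝ)) - Real.log ((t:ℝ) + β) := by
    intro t
    rw [log_Spred x w β hβ hw t]
    by_cases h : cnt x (x t) t = 0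
    · rw [if_pos h, if_pos h, h]
      simp
    · rw [if_neg h, if_neg h, zero_add]
  rw [Finset.sum_congr rfl (fun t _ => hsplit t), Finset.sum_sub_distrib, Finset.sum_add_distrib]
  have h1 : ∑ t ∈ Finset.range n,
      (if cnt x (x t) t = 0 then Real.log β + Real.log (w t (x t)) else 0)
      = ((alph x n).card : ℝ) * Real.log β + ∑ t ∈ newTimes x n, Real.log (w t (x t)) := by
    rw [← Finset.sum_filter, ← newTimes_eq, Finset.sum_add_distrib, Finset.sum_const,
      nsmul_eq_mul, card_newTimes]
  have h2 : ∑ t ∈ Finset.range n, Real.log ((cnt x (x t) t : ℕ) : ℝ)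
      = ∑ j ∈ alph x n, ∑ k ∈ Finset.range (cnt x j n), Real.log (k:ℝ) :=
    sum_over_range x (fun k => Real.log (k:ℝ)) n
  rw [h1, h2]

end LogS

section Analysis
open Topology

lemma stirling_ge (k : ℕ) (hk : 1 ≤ k) : Real.sqrt π ≤ Stirling.stirlingSeq k := by
  obtain ⟨j, rfl⟩ := Nat.exists_eq_add_of_le hk
  have htend : Tendsto (Stirling.stirlingSeq ∘ Nat.succ) atTop (𝓝 (Real.sqrt π)) := by
    have : (Stirling.stirlingSeq ∘ Nat.succ) = fun n => Stirling.stirlingSeq (n + 1) := by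
      funext n; simp [Nat.succ_eq_add_one]
    rw [this]
    exact (Filter.tendsto_add_atTop_iff_nat 1).2 Stirling.tendsto_stirlingSeq_sqrt_pi
  have := Stirling.stirlingSeq'_antitone.le_of_tendsto htend j
  simpa [Nat.add_comm] using this

lemma stirling_le (k : ℕ) (hk : 1 ≤ k) : Stirling.stirlingSeq k ≤ Real.exp 1 / Real.sqrt 2 := by
  obtain ⟨j, rfl⟩ := Nat.exists_eq_add_of_le hk
  have := Stirling.stirlingSeq'_antitone (Nat.zero_le j)
  simpa [Nat.add_comm, Stirling.stirlingSeq_one] using this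

lemma log_factorial_eq (k : ℕ) (hk : 1 ≤ k) :
    Real.log (Nat.factorial k : ℝ) = Real.log (Stirling.stirlingSeq k)
      + (1/2) * Real.log (2*k) + k * Real.log k - k := by
  have hk0 : (0:ℝ) < k := by exact_mod_cast hk
  have hD : (0:ℝ) < Real.sqrt (2*k) * ((k:ℝ) / Real.exp 1) ^ k := by positivity
  have hfac : (Nat.factorial k : ℝ)
      = Stirling.stirlingSeq k * (Real.sqrt (2*k) * ((k:ℝ) / Real.exp 1) ^ k) := by
    rw [Stirling.stirlingSeq, div_mul_cancel₀]
    exact ne_of_gt hD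
  have hs : (0:ℝ) < Stirling.stirlingSeq k := by
    rw [Stirling.stirlingSeq]
    have := Nat.factorial_pos k
    positivity
  rw [hfac, Real.log_mul (ne_of_gt hs) (ne_of_gt hD), Real.log_mul (by positivity) (by positivity),
    Real.log_sqrt (by positivity), Real.log_pow, Real.log_div (ne_of_gt hk0) (by positivity),
    Real.log_exp]
  ring

lemma log_factorial_ge (k : ℕ) (hk : 1 ≤ k) :
    (k:ℝ) * Real.log k - k + (1/2) * Real.log (2*π*k) ≤ Real.log (Nat.factorial k : ℝ) := by
  have hk0 : (0:ℝ) < k := by exact_mod_cast hk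
  have hs : (0:ℝ) < Stirling.stirlingSeq k := by
    rw [Stirling.stirlingSeq]
    have := Nat.factorial_pos k
    positivity
  have h1 : (1/2) * Real.log π ≤ Real.log (Stirling.stirlingSeq k) := by
    have := Real.log_le_log (Real.sqrt_pos.2 Real.pi_pos) (stirling_ge k hk)
    rw [Real.log_sqrt Real.pi_pos.le] at this
    linarith
  have h2 : Real.log (2*π*k) = Real.log π + Real.log (2*k) := by
    rw [← Real.log_mul (ne_of_gt Real.pi_pos) (by positivity)]
    ring_nf
  rw [log_factorial_eq k hk, h2]
  linarith

lemma log_factorial_le (k : ℕ) (hk : 1 ≤ k) :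
    Real.log (Nat.factorial k : ℝ) ≤ (k:ℝ) * Real.log k - k + (1/2) * Real.log k + 1 := by
  have hk0 : (0:ℝ) < k := by exact_mod_cast hk
  have hs : (0:ℝ) < Stirling.stirlingSeq k := by
    rw [Stirling.stirlingSeq]
    have := Nat.factorial_pos k
    positivity
  have h1 : Real.log (Stirling.stirlingSeq k) ≤ 1 - (1/2) * Real.log 2 := by
    have := Real.log_le_log hs (stirling_le k hk)
    rw [Real.log_div (Real.exp_ne_zero 1) (by positivity), Real.log_exp,
      Real.log_sqrt (by norm_num)] at this
    linarith
  have h2 : Real.log (2*(k:ℝ)) = Real.log 2 + Real.log k := by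
    rw [Real.log_mul (by norm_num) (ne_of_gt hk0)]
  rw [log_factorial_eq k hk]
  rw [h2] at *
  linarith

lemma sum_log_range_succ (N : ℕ) :
    ∑ k ∈ Finset.range (N+1), Real.log (k:ℝ) = Real.log (Nat.factorial N : ℝ) := by
  induction N with
  | zero => simp
  | succ N ih =>
    rw [Finset.sum_range_succ, ih, Nat.factorial_succ, Nat.cast_mul,
      Real.log_mul (by exact_mod_cast (Nat.succ_ne_zero N))
        (by exact_mod_cast (Nat.factorial_pos N).ne')]
    ring

lemma F_eq (N : ℕ) (h : 1 ≤ N) :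
    ∑ k ∈ Finset.range N, Real.log (k:ℝ) = Real.log ((Nat.factorial (N-1) : ℕ) : ℝ) := by
  conv_lhs => rw [show N = (N-1)+1 by omega]
  exact sum_log_range_succ (N-1)

lemma log_fact_split (N : ℕ) (h : 1 ≤ N) :
    Real.log (Nat.factorial N : ℝ)
      = Real.log (N:ℝ) + Real.log ((Nat.factorial (N-1) : ℕ) : ℝ) := by
  rw [← Real.log_mul (by exact_mod_cast (by omega : N ≠ 0))
    (by exact_mod_cast (Nat.factorial_pos (N-1)).ne'), ← Nat.cast_mul,
    Nat.mul_factorial_pred (by omega)]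

lemma per_symbol (N : ℕ) (h : 1 ≤ N) :
    (N:ℝ) + (1/2) * Real.log ((N:ℝ)/(2*π)) + ((1/2) * Real.log (2*π) - 1)
      ≤ (N:ℝ) * Real.log (N:ℝ) - ∑ k ∈ Finset.range N, Real.log (k:ℝ) := by
  have hN : (0:ℝ) < N := by exact_mod_cast h
  have h1 := log_factorial_le N h
  have h2 := log_fact_split N h
  have h3 := F_eq N h
  have h4 : Real.log ((N:ℝ)/(2*π)) = Real.log (N:ℝ) - Real.log (2*π) :=
    Real.log_div hN.ne' (by positivity)
  rw [h3]
  linarith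

lemma F_lower (n : ℕ) (h : 1 ≤ n) :
    (n:ℝ) * Real.log n - n + (1/2) * Real.log (2*π) - (1/2) * Real.log n
      ≤ ∑ k ∈ Finset.range n, Real.log (k:ℝ) := by
  have hn : (0:ℝ) < n := by exact_mod_cast h
  have h1 := log_factorial_ge n h
  have h2 := log_fact_split n h
  have h3 := F_eq n h
  have h4 : Real.log (2*π*n) = Real.log (2*π) + Real.log n :=
    Real.log_mul (by positivity) hn.ne'
  rw [h3]
  linarith

lemma F_upper (m : ℕ) (h : 1 ≤ m) :
    ∑ k ∈ Finset.range m, Real.log (k:ℝ) ≤ (m:ℝ) * Real.log m := by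
  have hm : (1:ℝ) ≤ m := by exact_mod_cast h
  have h3 := F_eq m h
  have hfle : ((Nat.factorial (m-1) : ℕ) : ℝ) ≤ ((m:ℝ)) ^ (m-1) := by
    calc ((Nat.factorial (m-1) : ℕ) : ℝ) ≤ (((m-1) ^ (m-1) : ℕ) : ℝ) := by
          exact_mod_cast Nat.factorial_le_pow (m-1)
      _ ≤ ((m:ℝ)) ^ (m-1) := by
          push_cast
          apply pow_le_pow_left₀ (by positivity)
          exact_mod_cast Nat.sub_le m 1
  have hlogm : 0 ≤ Real.log m := Real.log_nonneg hm
  have hmono := Real.log_le_log (by exact_mod_cast Nat.factorial_pos (m-1)) hfle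
  rw [Real.log_pow] at hmono
  rw [h3]
  calc Real.log ((Nat.factorial (m-1) : ℕ) : ℝ) ≤ ((m-1 : ℕ):ℝ) * Real.log m := hmono
    _ ≤ (m:ℝ) * Real.log m := by
        apply mul_le_mul_of_nonneg_right _ hlogm
        exact_mod_cast Nat.sub_le m 1

lemma beta_bound (n m : ℕ) (hm : 1 ≤ m) (hmn : m ≤ n) (β : ℝ) (hβ : 0 < β) :
    (∑ k ∈ Finset.range n, Real.log (k:ℝ)) - (∑ k ∈ Finset.range m, Real.log (k:ℝ))
      ≤ (∑ t ∈ Finset.range n, Real.log ((t:ℝ) + β)) - (m:ℝ) * Real.log β := by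
  have hsplit : ∀ f : ℕ → ℝ, ∑ t ∈ Finset.range n, f t
      = ∑ t ∈ Finset.range m, f t + ∑ t ∈ Finset.Ico m n, f t := by
    intro f
    rw [Finset.range_eq_Ico, ← Finset.sum_Ico_consecutive f (Nat.zero_le m) hmn, Finset.range_eq_Ico]
  rw [hsplit (fun t => Real.log ((t:ℝ) + β)), hsplit (fun k => Real.log (k:ℝ))]
  have hA : (m:ℝ) * Real.log β ≤ ∑ t ∈ Finset.range m, Real.log ((t:ℝ) + β) := by
    calc (m:ℝ) * Real.log β = ∑ _t ∈ Finset.range m, Real.log β := by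
          rw [Finset.sum_const, Finset.card_range, nsmul_eq_mul]
      _ ≤ _ := by
          apply Finset.sum_le_sum
          intro t _
          apply Real.log_le_log hβ
          have : (0:ℝ) ≤ (t:ℝ) := Nat.cast_nonneg t
          linarith
  have hB : ∑ t ∈ Finset.Ico m n, Real.log (t:ℝ)
      ≤ ∑ t ∈ Finset.Ico m n, Real.log ((t:ℝ) + β) := by
    apply Finset.sum_le_sum
    intro t ht
    have h1 : m ≤ t := (Finset.mem_Ico.1 ht).1
    have h2 : (0:ℝ) < t := by exact_mod_cast lt_of_lt_of_le hm h1
    apply Real.log_le_log h2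
    linarith
  have hC : 0 ≤ ∑ k ∈ Finset.range m, Real.log (k:ℝ) := by
    apply Finset.sum_nonneg
    intro k _
    rcases Nat.eq_zero_or_pos k with h | h
    · simp [h]
    · exact Real.log_natCast_nonneg k
  linarith

lemma log_two_pi_ge : (1.1 : ℝ) ≤ Real.log (2*π) := by
  have h4 : (4:ℝ) ≤ 2*π := by nlinarith [Real.pi_gt_three]
  have := Real.log_le_log (by norm_num : (0:ℝ) < 4) h4
  have h2 : Real.log 4 = 2 * Real.log 2 := by
    rw [show (4:ℝ) = 2^(2:ℕ) by norm_num, Real.log_pow]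
    norm_num
  have := Real.log_two_gt_d9
  linarith

end Analysis

/-- Theorem 2: `β`-independent lower redundancy bound, Eq. (10). -/
theorem red_lower_bound_uniform
    (n : ℕ) (hn : 1 ≤ n) (x : ℕ → 𝒳) (w : ℕ → 𝒳 → ℝ)
    (hw : ∀ t i, 0 < w t i)
    (hwsum : ∀ t, ∑ k ∈ Finset.univ \ alph x t, w t k ≤ 1)
    (β : ℝ) (hβ : 0 < β) :
    Red x w (fun _ => β) n ≥
      CLw x w n - (alph x n).card * Real.log (alph x n).card
      + ∑ j ∈ alph x n, (1/2) * Real.log ((cnt x j n : ℝ) / (2 * π))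
      - (1/2) * Real.log n - 0.45 * (alph x n).card - 0.43 := by
  classical
  have hn0 : (0:ℝ) < n := by exact_mod_cast hn
  have hm1 : 1 ≤ (alph x n).card := by
    apply Finset.card_pos.2
    exact ⟨x 0, Finset.mem_image_of_mem x (Finset.mem_range.2 (by omega))⟩
  have hmn : (alph x n).card ≤ n := by
    have h := Finset.card_image_le (s := Finset.range n) (f := x)
    rwa [Finset.card_range] at h
  have hm0 : (0:ℝ) ≤ ((alph x n).card : ℝ) := Nat.cast_nonneg _
  -- expand the ideal code length
  have hRed1 : Real.log (((n : ℝ) ^ n)⁻¹ * ∏ j ∈ alph x n, (cnt x j n : ℝ) ^ cnt x j n)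
      = -((n:ℝ) * Real.log n)
        + ∑ j ∈ alph x n, (cnt x j n : ℝ) * Real.log (cnt x j n) := by
    have hprodne : ∀ j ∈ alph x n, ((cnt x j n : ℝ) ^ cnt x j n) ≠ 0 := by
      intro j hj
      have := cnt_pos_of_mem x n hj
      have : (0:ℝ) < (cnt x j n : ℝ) := by exact_mod_cast this
      positivity
    rw [Real.log_mul (by positivity) (Finset.prod_ne_zero_iff.2 hprodne), Real.log_inv,
      Real.log_pow, Real.log_prod hprodne]
    congr 1
    exact Finset.sum_congr rfl fun j _ => Real.log_pow _ _
  -- CLw relation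
  have hCL : ∑ t ∈ newTimes x n, Real.log (w t (x t)) = - CLw x w n := by
    rw [CLw, ← Finset.sum_neg_distrib]
    exact Finset.sum_congr rfl fun t _ => by rw [one_div, Real.log_inv, neg_neg]
  -- per-symbol sum bound
  have hPS : ∑ j ∈ alph x n, ((cnt x j n : ℝ) + (1/2) * Real.log ((cnt x j n : ℝ)/(2*π))
        + ((1/2)*Real.log (2*π) - 1))
      ≤ ∑ j ∈ alph x n, ((cnt x j n : ℝ) * Real.log (cnt x j n)
        - ∑ k ∈ Finset.range (cnt x j n), Real.log (k:ℝ)) :=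
    Finset.sum_le_sum fun j hj => per_symbol _ (cnt_pos_of_mem x n hj)
  have hsumcnt : ∑ j ∈ alph x n, ((cnt x j n : ℕ):ℝ) = (n:ℝ) := by
    rw [← Nat.cast_sum, sum_cnt]
  rw [Finset.sum_add_distrib, Finset.sum_add_distrib, Finset.sum_const, nsmul_eq_mul,
    hsumcnt, Finset.sum_sub_distrib] at hPS
  -- beta term bound
  have hB := beta_bound n (alph x n).card hm1 hmn β hβ
  have hC := F_lower n hn
  have hD := F_upper (alph x n).card hm1
  have hE := log_two_pi_ge
  have hE' : (-0.45 : ℝ) * ((alph x n).card : ℝ)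
      ≤ ((alph x n).card : ℝ) * ((1/2)*Real.log (2*π) - 1) := by
    have h1 : (-0.45:ℝ) ≤ (1/2)*Real.log (2*π) - 1 := by linarith
    nlinarith
  -- expand Red
  rw [Red, hRed1, log_Sjoint x w β hβ hw n, hCL]
  linarith
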